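/- arXiv:1907.13302 — 8 statements merged into one kernel-verified Lean document; each statement's English description precedes it below -/
import Mathlib

section
/- The function g is a bijection of ℤ onto itself (an 'infinite permutation' of the integers). -/
/-!
Writing `n = 3k`, `3k + 1` or `3k - 1`, the map `g` sends these residue classes to `2k`, `4k + 1`
and `4k - 1` respectively, i.e. onto the even integers, the integers `≡ 1 (mod 4)` and the integers
`≡ 3 (mod 4)`. These three classes partition `ℤ` again, so reading the formulas backwards gives a
two-sided inverse `gInv`.
-/

/-- The mapping generating the original Collatz problem. -/
def g (n : ℤ) : ℤ :=
  if n % 3 = 0 then 2 * n / 3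
  else if n % 3 = 1 then (4 * n - 1) / 3
  else (4 * n + 1) / 3

def gInv (m : ℤ) : ℤ :=
  if m % 2 = 0 then 3 * m / 2
  else if m % 4 = 1 then (3 * m + 1) / 4
  else (3 * m - 1) / 4

theorem gInv_g : Function.LeftInverse gInv g := by
  intro n
  simp only [g, gInv]
  split_ifs <;> omega

theorem g_gInv : Function.RightInverse gInv g := by
  intro m
  simp only [g, gInv]
  split_ifs <;> omega

/-- `g` is a bijection of `ℤ` onto itself (an "infinite permutation"). -/
theorem g_bijective : Function.Bijective g :=
  ⟨gInv_g.injective, g_gInv.surjective⟩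
end

section
/- For every integer n and every natural number k, writing k₁ for the number of indices i < k such that g^(i)(n) is not divisible by 3 and k₂ = k - k₁, and λ = (4/3)^{k₁}·(2/3)^{k₂} ∈ ℚ, one has |g^(k)(n) - λ·n| ≤ (4^{k₁} - 3^{k₁})/3^{k₁} (as rational numbers). -/
lemma g_dvd_aux (m : ℤ) (h : (3:ℤ) ∣ m) : 3 * g m = 2 * m := by
  unfold g; split_ifs <;> omega

lemma g_not_dvd_aux (m : ℤ) (h : ¬ (3:ℤ) ∣ m) : |3 * g m - 4 * m| ≤ 1 := by
  unfold g; rw [abs_le]; split_ifs <;> omega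

lemma key_rho (n : ℤ) (k : ℕ) :
    |((g^[k] n : ℤ) : ℚ) -
      ((4 / 3 : ℚ) ^ (((Finset.range k).filter fun i => ¬ (3 : ℤ) ∣ g^[i] n).card) *
       (2 / 3 : ℚ) ^ (k - (((Finset.range k).filter fun i => ¬ (3 : ℤ) ∣ g^[i] n).card))) * n| ≤
    ((4:ℚ) ^ (((Finset.range k).filter fun i => ¬ (3 : ℤ) ∣ g^[i] n).card) -
     (3:ℚ) ^ (((Finset.range k).filter fun i => ¬ (3 : ℤ) ∣ g^[i] n).card)) /
     (3:ℚ) ^ (((Finset.range k).filter fun i => ¬ (3 : ℤ) ∣ g^[i] n).card) := by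
  induction k with
  | zero => simp
  | succ k ih =>
    set K := (((Finset.range k).filter fun i => ¬ (3 : ℤ) ∣ g^[i] n).card) with hK
    have hKle : K ≤ k := le_trans (Finset.card_filter_le _ _) (by simp)
    set m := g^[k] n with hm
    have hstep : g^[k+1] n = g m := by rw [Function.iterate_succ_apply']
    have h34 : (3:ℚ)^K ≤ 4^K := by
      apply pow_le_pow_left₀ <;> norm_num
    have hp : (0:ℚ) < 3^K := by positivity
    have hB : (0:ℚ) ≤ ((4:ℚ)^K - 3^K)/3^K := div_nonneg (by linarith) hp.le
    have hcard : (((Finset.range (k+1)).filter fun i => ¬ (3 : ℤ) ∣ g^[i] n).card)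
        = if (3:ℤ) ∣ m then K else K + 1 := by
      rw [Finset.range_add_one, Finset.filter_insert]
      by_cases hd : (3:ℤ) ∣ m
      · simp [hd, ← hm, ← hK]
      · simp only [hd, ← hm, not_false_iff, if_true, if_neg hd]
        rw [Finset.card_insert_of_notMem (by simp)]
        simp [← hK]
    by_cases hd : (3:ℤ) ∣ m
    · have hgm : ((g m : ℤ):ℚ) = 2/3 * m := by
        have h1 := g_dvd_aux m hd
        have h2 : (3:ℚ) * (g m : ℤ) = 2 * (m : ℚ) := by exact_mod_cast congrArg Int.cast h1
        linarith
      rw [hcard, if_pos hd, hstep, hgm,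
        show k + 1 - K = (k - K) + 1 by omega]
      have e : (2/3:ℚ)*m - ((4/3)^K*(2/3)^(k-K+1))*n
          = (2/3) * ((m:ℚ) - ((4/3)^K*(2/3)^(k-K))*n) := by ring
      rw [e, abs_mul, abs_of_nonneg (by norm_num : (0:ℚ) ≤ 2/3)]
      nlinarith [abs_nonneg ((m:ℚ) - ((4/3)^K*(2/3)^(k-K))*n), ih]
    · have hb : |((g m : ℤ):ℚ) - 4/3*m| ≤ 1/3 := by
        have h1 := g_not_dvd_aux m hd
        have h2 : |(3:ℚ) * (g m : ℤ) - 4 * (m:ℚ)| ≤ 1 := by exact_mod_cast h1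
        rw [abs_le] at h2 ⊢
        constructor <;> [linarith [h2.1]; linarith [h2.2]]
      rw [hcard, if_neg hd, hstep,
        show k + 1 - (K + 1) = k - K by omega]
      have e : ((g m : ℤ):ℚ) - ((4/3)^(K+1)*(2/3)^(k-K))*n
          = (((g m : ℤ):ℚ) - 4/3*m) + (4/3) * ((m:ℚ) - ((4/3)^K*(2/3)^(k-K))*n) := by ring
      rw [e]
      have htri := abs_add_le (((g m : ℤ):ℚ) - 4/3*m)
        ((4/3) * ((m:ℚ) - ((4/3)^K*(2/3)^(k-K))*n))
      rw [abs_mul, abs_of_nonneg (by norm_num : (0:ℚ) ≤ 4/3)] at htri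
      have hfin : (1:ℚ)/3 + 4/3*(((4:ℚ)^K - 3^K)/3^K)
          = ((4:ℚ)^(K+1) - 3^(K+1))/3^(K+1) := by
        field_simp
        ring
      nlinarith [abs_nonneg ((m:ℚ) - ((4/3)^K*(2/3)^(k-K))*n), ih]

/-- After `k` iterations of `g` on `n`, writing `g^[k] n = λ·n + ρ_k(n)` with
`λ = (4/3)^k₁ (2/3)^k₂`, where `k₁` counts the steps on integers not divisible
by 3 and `k₂ = k - k₁`, the remainder satisfies `|ρ_k(n)| ≤ (4^k₁ - 3^k₁)/3^k₁`. -/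
theorem abs_rho_le (n : ℤ) (k : ℕ) (k₁ k₂ : ℕ)
    (hk₁ : k₁ = ((Finset.range k).filter fun i => ¬ (3 : ℤ) ∣ g^[i] n).card)
    (hk₂ : k₂ = k - k₁) :
    |((g^[k] n : ℤ) : ℚ) - ((4 / 3 : ℚ) ^ k₁ * (2 / 3 : ℚ) ^ k₂) * (n : ℚ)| ≤
      ((4 : ℚ) ^ k₁ - (3 : ℚ) ^ k₁) / (3 : ℚ) ^ k₁ := by
  subst hk₂; subst hk₁
  exact key_rho n k
end

section
/- Along the PP/PG algorithm started at (2/3, 4/3), the first component is always strictly between 1/2 and 1, the second component is always strictly between 1 and 2, the first components form a nondecreasing sequence, and the second components form a nonincreasing sequence: for all n, 1/2 < aₙ < 1 < bₙ < 2, aₙ ≤ aₙ₊₁, and bₙ₊₁ ≤ bₙ. -/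
/-!
Each pair met by the algorithm is `(λ k, λ l)` with `λ k = (4/3)^k₁ (2/3)^k₂` and `k ≠ 0`, since a
step only multiplies the two entries, adding their indices. As `4^k₁ 2^k₂` is even and
`3^(k₁+k₂)` odd, `λ k ≠ 1` for `k ≠ 0`, so the product `a·b = λ (k + l)` is never `1`. Hence each
step replaces `a` by `a·b ∈ (a, 1)` or `b` by `a·b ∈ (1, b)`, which keeps `(a, b)` in
`(1/2, 1) × (1, 2)` and moves both components monotonically.
-/

/-- One step of the PP/PG algorithm: replace the pair `(a, b)` by `(a·b, b)`
if `a·b < 1` and by `(a, a·b)` otherwise. -/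
noncomputable def step (p : ℝ × ℝ) : ℝ × ℝ :=
  if p.1 * p.2 < 1 then (p.1 * p.2, p.2) else (p.1, p.1 * p.2)

/-- The PP/PG algorithm for the original Collatz mapping, started at `(2/3, 4/3)`. -/
noncomputable def s : ℕ → ℝ × ℝ
  | 0 => (2 / 3, 4 / 3)
  | n + 1 => step (s n)

open Set

/-- The parameter `λ_{k₁,k₂}` of the Collatz mapping. -/
noncomputable def lam (k : ℕ × ℕ) : ℝ := (4 / 3) ^ k.1 * (2 / 3) ^ k.2

lemma lam_add (k l : ℕ × ℕ) : lam (k + l) = lam k * lam l := by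
  simp only [lam, Prod.fst_add, Prod.snd_add, pow_add]
  ring

lemma lam_ne_one {k : ℕ × ℕ} (hk : k ≠ 0) : lam k ≠ 1 := by
  intro h
  have hnat : 4 ^ k.1 * 2 ^ k.2 = 3 ^ (k.1 + k.2) := by
    have : (4 : ℝ) ^ k.1 * 2 ^ k.2 = 3 ^ (k.1 + k.2) := by
      rw [lam, div_pow, div_pow] at h
      field_simp at h
      rw [pow_add, h]
    exact_mod_cast this
  have hodd : ¬Even (4 ^ k.1 * 2 ^ k.2) := Nat.not_even_iff_odd.mpr (hnat ▸ Odd.pow (by decide))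
  have hk0 : k.1 = 0 ∧ k.2 = 0 := by
    simpa [Nat.even_mul, Nat.even_pow, (by decide : Even 4)] using hodd
  exact hk (Prod.ext hk0.1 hk0.2)

lemma step_lam (k l : ℕ × ℕ) :
    step (lam k, lam l) = (lam (k + l), lam l) ∨ step (lam k, lam l) = (lam k, lam (k + l)) := by
  rw [step, lam_add]
  split_ifs
  exacts [Or.inl rfl, Or.inr rfl]

lemma exists_s_eq_lam (n : ℕ) : ∃ k l : ℕ × ℕ, k ≠ 0 ∧ s n = (lam k, lam l) := by
  induction n with
  | zero => exact ⟨(0, 1), (1, 0), by simp, by norm_num [s, lam]⟩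
  | succ n ih =>
    obtain ⟨k, l, hk, hs⟩ := ih
    rcases step_lam k l with h | h
    · exact ⟨k + l, l, add_ne_zero.mpr (.inl hk), by rw [s, hs, h]⟩
    · exact ⟨k, k + l, hk, by rw [s, hs, h]⟩

lemma fst_mul_snd_s_ne_one (n : ℕ) : (s n).1 * (s n).2 ≠ 1 := by
  obtain ⟨k, l, hk, hs⟩ := exists_s_eq_lam n
  rw [hs, ← lam_add]
  exact lam_ne_one (add_ne_zero.mpr (.inl hk))

lemma step_mem_box {p : ℝ × ℝ} (hp : p ∈ Ioo (1 / 2 : ℝ) 1 ×ˢ Ioo 1 2) (h : p.1 * p.2 ≠ 1) :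
    step p ∈ Ioo (1 / 2 : ℝ) 1 ×ˢ Ioo 1 2 := by
  obtain ⟨⟨ha, ha'⟩, ⟨hb, hb'⟩⟩ := hp
  rw [step]
  split_ifs with hab
  · exact ⟨⟨by nlinarith, hab⟩, hb, hb'⟩
  · have hab : 1 < p.1 * p.2 := lt_of_le_of_ne (not_lt.mp hab) h.symm
    exact ⟨⟨ha, ha'⟩, hab, by nlinarith⟩

lemma s_mem_box (n : ℕ) : s n ∈ Ioo (1 / 2 : ℝ) 1 ×ˢ Ioo 1 2 := by
  induction n with
  | zero => norm_num [s]
  | succ n ih => exact step_mem_box ih (fst_mul_snd_s_ne_one n)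

lemma fst_le_step_fst {p : ℝ × ℝ} (ha : 0 ≤ p.1) (hb : 1 ≤ p.2) : p.1 ≤ (step p).1 := by
  rw [step]
  split_ifs
  exacts [le_mul_of_one_le_right ha hb, le_rfl]

lemma step_snd_le_snd {p : ℝ × ℝ} (ha : p.1 ≤ 1) (hb : 0 ≤ p.2) : (step p).2 ≤ p.2 := by
  rw [step]
  split_ifs
  exacts [le_rfl, mul_le_of_le_one_left hb ha]

/-- Along the PP/PG algorithm started at `(2/3, 4/3)`: `1/2 < aₙ < 1 < bₙ < 2`,
the `aₙ` are nondecreasing, and the `bₙ` are nonincreasing. -/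
theorem s_bounds_monotone (n : ℕ) :
    1 / 2 < (s n).1 ∧ (s n).1 < 1 ∧ 1 < (s n).2 ∧ (s n).2 < 2 ∧
    (s n).1 ≤ (s (n + 1)).1 ∧ (s (n + 1)).2 ≤ (s n).2 := by
  obtain ⟨⟨ha, ha'⟩, ⟨hb, hb'⟩⟩ := s_mem_box n
  exact ⟨ha, ha', hb, hb', fst_le_step_fst (by linarith) hb.le,
    step_snd_le_snd ha'.le (by linarith)⟩
end

section
/- The PP/PG algorithm started at (2/3, 4/3) converges to 1 in both components: the sequence (aₙ) tends to 1 and the sequence (bₙ) tends to 1 as n → ∞; the successive products PP·PG give values which approach 1 more and more without ever reaching it. -/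
open Filter

/-- Values reachable as components of the algorithm: nontrivial products of
powers of `4/3` and `2/3`. -/
def QQ (r : ℝ) : Prop := ∃ k l : ℕ, 0 < k + l ∧ r = (4/3 : ℝ)^k * (2/3 : ℝ)^l

lemma QQ_ne_one {r : ℝ} (h : QQ r) : r ≠ 1 := by
  obtain ⟨k, l, hkl, rfl⟩ := h
  intro h1
  have key : ((4:ℝ))^k * 2^l = 3^k * 3^l := by
    have h3 : (3:ℝ) ≠ 0 := by norm_num
    field_simp [div_pow] at h1
    rw [div_pow, div_pow, div_mul_div_comm, div_eq_one_iff_eq (by positivity)] at h1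
    linarith
  have keyN : 4^k * 2^l = 3^k * 3^l := by exact_mod_cast key
  have hdvd : 3 ∣ 4^k * 2^l := by
    rw [keyN, ← pow_add]
    exact dvd_pow_self 3 hkl.ne'
  have hcop : Nat.Coprime 3 (4^k * 2^l) :=
    Nat.Coprime.mul_right (Nat.Coprime.pow_right _ (by decide))
      (Nat.Coprime.pow_right _ (by decide))
  have := Nat.Coprime.eq_one_of_dvd hcop hdvd
  omega

lemma QQ_mul {r t : ℝ} (hr : QQ r) (ht : QQ t) : QQ (r * t) := by
  obtain ⟨k, l, hkl, rfl⟩ := hr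
  obtain ⟨k', l', hkl', rfl⟩ := ht
  exact ⟨k + k', l + l', by omega, by rw [pow_add, pow_add]; ring⟩

lemma s_inv (n : ℕ) :
    0 < (s n).1 ∧ (s n).1 < 1 ∧ 1 < (s n).2 ∧ QQ (s n).1 ∧ QQ (s n).2 := by
  induction n with
  | zero =>
    refine ⟨by norm_num [s], by norm_num [s], by norm_num [s],
      ⟨0, 1, by omega, by norm_num [s]⟩, ⟨1, 0, by omega, by norm_num [s]⟩⟩
  | succ n ih =>
    obtain ⟨h0, h1, h2, qa, qb⟩ := ih
    have hq : QQ ((s n).1 * (s n).2) := QQ_mul qa qb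
    have hs : s (n+1) = step (s n) := rfl
    rw [hs, step]
    by_cases hc : (s n).1 * (s n).2 < 1
    · rw [if_pos hc]
      exact ⟨mul_pos h0 (by linarith), hc, h2, hq, qb⟩
    · rw [if_neg hc]
      have : 1 < (s n).1 * (s n).2 :=
        lt_of_le_of_ne (not_lt.mp hc) (Ne.symm (QQ_ne_one hq))
      exact ⟨h0, h1, this, qa, hq⟩

lemma s_step (n : ℕ) :
    ((s n).1 * (s n).2 < 1 ∧ (s (n+1)).1 = (s n).1 * (s n).2 ∧ (s (n+1)).2 = (s n).2) ∨
    (1 < (s n).1 * (s n).2 ∧ (s (n+1)).1 = (s n).1 ∧ (s (n+1)).2 = (s n).1 * (s n).2) := by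
  have hs : s (n+1) = step (s n) := rfl
  by_cases hc : (s n).1 * (s n).2 < 1
  · left; refine ⟨hc, ?_, ?_⟩ <;> rw [hs, step, if_pos hc]
  · right
    have hq : QQ ((s n).1 * (s n).2) := QQ_mul (s_inv n).2.2.2.1 (s_inv n).2.2.2.2
    refine ⟨lt_of_le_of_ne (not_lt.mp hc) (Ne.symm (QQ_ne_one hq)), ?_, ?_⟩ <;>
      rw [hs, step, if_neg hc]

/-- Both components of the PP/PG algorithm tend to 1 without ever reaching it. -/
theorem s_tendsto_one :
    Filter.Tendsto (fun n => (s n).1) Filter.atTop (nhds 1) ∧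
    Filter.Tendsto (fun n => (s n).2) Filter.atTop (nhds 1) ∧
    ∀ n, (s n).1 ≠ 1 ∧ (s n).2 ≠ 1 := by
  set a : ℕ → ℝ := fun n => (s n).1 with ha_def
  set b : ℕ → ℝ := fun n => (s n).2 with hb_def
  have h0 : ∀ n, 0 < a n := fun n => (s_inv n).1
  have h1 : ∀ n, a n < 1 := fun n => (s_inv n).2.1
  have h2 : ∀ n, 1 < b n := fun n => (s_inv n).2.2.1
  have hb0 : ∀ n, 0 < b n := fun n => lt_trans one_pos (h2 n)
  have hstep : ∀ n, (a n * b n < 1 ∧ a (n+1) = a n * b n ∧ b (n+1) = b n) ∨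
      (1 < a n * b n ∧ a (n+1) = a n ∧ b (n+1) = a n * b n) := s_step
  have amono : Monotone a := by
    apply monotone_nat_of_le_succ
    intro n
    rcases hstep n with ⟨_, ha', _⟩ | ⟨_, ha', _⟩
    · rw [ha']; nlinarith [h0 n, h2 n]
    · rw [ha']
  have banti : Antitone b := by
    apply antitone_nat_of_succ_le
    intro n
    rcases hstep n with ⟨_, _, hb'⟩ | ⟨_, _, hb'⟩
    · rw [hb']
    · rw [hb']; nlinarith [h1 n, hb0 n]
  have abdd : BddAbove (Set.range a) := ⟨1, by rintro x ⟨n, rfl⟩; exact (h1 n).le⟩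
  have bbdd : BddBelow (Set.range b) := ⟨1, by rintro x ⟨n, rfl⟩; exact (h2 n).le⟩
  set A := ⨆ n, a n with hA_def
  set B := ⨅ n, b n with hB_def
  have hta : Tendsto a atTop (nhds A) := tendsto_atTop_ciSup amono abdd
  have htb : Tendsto b atTop (nhds B) := tendsto_atTop_ciInf banti bbdd
  have haA : ∀ n, a n ≤ A := fun n => le_ciSup abdd n
  have hbB : ∀ n, B ≤ b n := fun n => ciInf_le bbdd n
  have hA1 : A ≤ 1 := ciSup_le fun n => (h1 n).le
  have h1B : 1 ≤ B := le_ciInf fun n => (h2 n).le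
  have hA0 : 0 < A := lt_of_lt_of_le (h0 0) (haA 0)
  have hB0 : 0 < B := by linarith
  -- Case: A < 1 and B = 1 leads to contradiction
  have case1 : A < 1 → B = 1 → False := by
    intro hA hB
    have h1A : 1 < 1 / A := by rw [lt_div_iff₀ hA0]; linarith
    obtain ⟨N, hN⟩ := eventually_atTop.mp (htb.eventually_lt_const (by rw [hB]; exact h1A))
    have key : ∀ k, a (N + k) = a N * (b N)^k ∧ b (N + k) = b N := by
      intro k
      induction k with
      | zero => simp
      | succ k ih =>
        have hbk : b (N + k) = b N := ih.2
        have hlt : a (N + k) * b (N + k) < 1 := by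
          have hb' : b (N + k) < 1 / A := hN (N + k) (by omega)
          have e1 : a (N + k) * b (N + k) ≤ A * b (N + k) :=
            mul_le_mul_of_nonneg_right (haA (N + k)) (hb0 (N + k)).le
          have e2 : A * b (N + k) < A * (1 / A) := mul_lt_mul_of_pos_left hb' hA0
          have e3 : A * (1 / A) = 1 := by field_simp
          linarith
        rcases hstep (N + k) with ⟨_, ha', hb'⟩ | ⟨hgt, _, _⟩
        · have hnk : N + (k + 1) = (N + k) + 1 := by omega
          constructor
          · rw [hnk, ha', ih.1, hbk, pow_succ]; ring
          · rw [hnk, hb', hbk]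
        · linarith
    have hgrow : Tendsto (fun k => a N * (b N)^k) atTop atTop :=
      (tendsto_pow_atTop_atTop_of_one_lt (h2 N)).const_mul_atTop (h0 N)
    obtain ⟨k, hk⟩ := (hgrow.eventually_gt_atTop 1).exists
    have := h1 (N + k)
    rw [(key k).1] at this
    linarith
  -- Case: A = 1 and 1 < B leads to contradiction
  have case2 : 1 < B → A = 1 → False := by
    intro hB hA
    have h1A : 1 / B < 1 := by rw [div_lt_one hB0]; exact hB
    obtain ⟨N, hN⟩ := eventually_atTop.mp (hta.eventually_const_lt (by rw [hA]; exact h1A))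
    have key : ∀ k, b (N + k) = b N * (a N)^k ∧ a (N + k) = a N := by
      intro k
      induction k with
      | zero => simp
      | succ k ih =>
        have hak : a (N + k) = a N := ih.2
        have hgt : 1 < a (N + k) * b (N + k) := by
          have ha' : 1 / B < a (N + k) := hN (N + k) (by omega)
          have hbb := hbB (N + k)
          have : 1 / B * B = 1 := by field_simp
          nlinarith [h0 (N + k)]
        rcases hstep (N + k) with ⟨hlt, _, _⟩ | ⟨_, ha', hb'⟩
        · linarith
        · have hnk : N + (k + 1) = (N + k) + 1 := by omega
          constructor
          · rw [hnk, hb', ih.1, hak, pow_succ]; ring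
          · rw [hnk, ha', hak]
    have hdecay : Tendsto (fun k => b N * (a N)^k) atTop (nhds 0) := by
      have := tendsto_pow_atTop_nhds_zero_of_lt_one (h0 N).le (h1 N)
      simpa using this.const_mul (b N)
    obtain ⟨k, hk⟩ := (hdecay.eventually_lt_const hB0).exists
    have := hbB (N + k)
    rw [(key k).1] at this
    linarith
  -- Case: A < 1 and 1 < B leads to contradiction
  have case3 : A < 1 → 1 < B → False := by
    intro hA hB
    set θ := min B (1 / A) with hθ_def
    have hθ : 1 < θ := lt_min hB (by rw [lt_div_iff₀ hA0]; linarith)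
    have hq : ∀ n, θ * (a n / b n) ≤ a (n + 1) / b (n + 1) := by
      intro n
      have hbn := hb0 n
      have han := h0 n
      rcases hstep n with ⟨_, ha', hb'⟩ | ⟨_, ha', hb'⟩
      · rw [ha', hb', mul_div_cancel_right₀ _ hbn.ne', ← mul_div_assoc,
          div_le_iff₀ hbn]
        have hθb : θ ≤ b n := le_trans (min_le_left _ _) (hbB n)
        nlinarith
      · rw [ha', hb']
        have hrw : a n / (a n * b n) = 1 / b n := by
          rw [div_mul_eq_div_div, div_self han.ne']
        rw [hrw, ← mul_div_assoc, div_le_div_iff₀ hbn hbn]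
        have hθA : θ ≤ 1 / A := min_le_right _ _
        have haA' : a n ≤ A := haA n
        have hAinv : 1 / A * A = 1 := by field_simp
        have hθa : θ * a n ≤ 1 := by
          have := mul_le_mul hθA haA' han.le (by positivity : (0:ℝ) ≤ 1 / A)
          linarith
        nlinarith
    have hpow : ∀ n, θ^n * (a 0 / b 0) ≤ a n / b n := by
      intro n
      induction n with
      | zero => simp
      | succ n ih =>
        calc θ^(n+1) * (a 0 / b 0) = θ * (θ^n * (a 0 / b 0)) := by ring
        _ ≤ θ * (a n / b n) := by nlinarith
        _ ≤ a (n+1) / b (n+1) := hq n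
    have hgrow : Tendsto (fun n => θ^n * (a 0 / b 0)) atTop atTop :=
      (tendsto_pow_atTop_atTop_of_one_lt hθ).atTop_mul_const (div_pos (h0 0) (hb0 0))
    obtain ⟨n, hn⟩ := (hgrow.eventually_gt_atTop 1).exists
    have hlt1 : a n / b n < 1 := by
      rw [div_lt_one (hb0 n)]; exact lt_trans (h1 n) (h2 n)
    have := hpow n
    linarith
  have hAeq : A = 1 := by
    rcases lt_or_eq_of_le hA1 with h | h
    · exfalso
      rcases lt_or_eq_of_le h1B with h' | h'
      · exact case3 h h'
      · exact case1 h h'.symm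
    · exact h
  have hBeq : B = 1 := by
    rcases lt_or_eq_of_le h1B with h' | h'
    · exact (case2 h' hAeq).elim
    · exact h'.symm
  exact ⟨hAeq ▸ hta, hBeq ▸ htb,
    fun n => ⟨QQ_ne_one (s_inv n).2.2.2.1, QQ_ne_one (s_inv n).2.2.2.2⟩⟩
end

section
/- The PP and PG values of the 3x+1 algorithm are the reciprocals of those of the infinite-permutation algorithm: writing s(n) = (aₙ, bₙ) for the algorithm started at (2/3, 4/3) and t(n) = (cₙ, dₙ) for the same algorithm started at (1/2, 3/2), one has for every n that cₙ₊₁ = 1/bₙ and dₙ₊₁ = 1/aₙ. -/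
/-- The PP/PG algorithm for the `3x+1` mapping, started at `(1/2, 3/2)`. -/
noncomputable def t : ℕ → ℝ × ℝ
  | 0 => (1 / 2, 3 / 2)
  | n + 1 => step (t n)

theorem step_inv_swap {p : ℝ × ℝ} (hpos : 0 < p.1 * p.2) (hne : p.1 * p.2 ≠ 1) :
    step p⁻¹.swap = (step p)⁻¹.swap := by
  have hprod : p⁻¹.swap.1 * p⁻¹.swap.2 = (p.1 * p.2)⁻¹ := by
    simp only [Prod.fst_swap, Prod.snd_swap, Prod.fst_inv, Prod.snd_inv, mul_inv, mul_comm]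
  unfold step
  rw [hprod]
  rcases hne.lt_or_gt with hlt | hgt
  · rw [if_neg (one_lt_inv₀ hpos |>.mpr hlt).not_gt, if_pos hlt]
    ext <;> simp [mul_comm]
  · rw [if_pos (inv_lt_one_of_one_lt₀ hgt), if_neg hgt.not_gt]
    ext <;> simp [mul_comm]

theorem two_pow_div_three_pow_ne_one (i : ℕ) {j : ℕ} (hj : j ≠ 0) :
    (2 : ℝ) ^ i / 3 ^ j ≠ 1 := by
  rw [Ne, div_eq_one_iff_eq (by positivity)]
  norm_cast
  intro h
  have h3 : 3 ∣ 2 ^ i := h ▸ dvd_pow_self 3 hj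
  exact absurd (Nat.Prime.dvd_of_dvd_pow Nat.prime_three h3) (by norm_num)

def twoPowDivThreePow : Subsemigroup ℝ where
  carrier := {x | ∃ i j : ℕ, j ≠ 0 ∧ x = 2 ^ i / 3 ^ j}
  mul_mem' := by
    rintro _ _ ⟨i, j, hj, rfl⟩ ⟨k, l, -, rfl⟩
    exact ⟨i + k, j + l, by omega, by rw [pow_add, pow_add, div_mul_div_comm]⟩

theorem pos_of_mem_twoPowDivThreePow {x : ℝ} (hx : x ∈ twoPowDivThreePow) : 0 < x := by
  obtain ⟨i, j, -, rfl⟩ := hx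
  positivity

theorem ne_one_of_mem_twoPowDivThreePow {x : ℝ} (hx : x ∈ twoPowDivThreePow) : x ≠ 1 := by
  obtain ⟨i, j, hj, rfl⟩ := hx
  exact two_pow_div_three_pow_ne_one i hj

theorem step_mem_prod {M : Subsemigroup ℝ} {p : ℝ × ℝ} (hp : p ∈ M.prod M) :
    step p ∈ M.prod M := by
  obtain ⟨h1, h2⟩ := Subsemigroup.mem_prod.mp hp
  unfold step
  split_ifs
  exacts [Subsemigroup.mem_prod.mpr ⟨M.mul_mem h1 h2, h2⟩,
    Subsemigroup.mem_prod.mpr ⟨h1, M.mul_mem h1 h2⟩]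

theorem s_mem_prod (n : ℕ) : s n ∈ twoPowDivThreePow.prod twoPowDivThreePow := by
  induction n with
  | zero => exact ⟨⟨1, 1, one_ne_zero, by norm_num [s]⟩, ⟨2, 1, one_ne_zero, by norm_num [s]⟩⟩
  | succ n ih => exact step_mem_prod ih

theorem t_succ_eq_inv_swap_s (n : ℕ) : t (n + 1) = (s n)⁻¹.swap := by
  induction n with
  | zero => norm_num [t, s, step]
  | succ n ih =>
    obtain ⟨h1, h2⟩ := Subsemigroup.mem_prod.mp (s_mem_prod n)
    have hmem := twoPowDivThreePow.mul_mem h1 h2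
    calc t (n + 2) = step (s n)⁻¹.swap := congrArg step ih
      _ = (s (n + 1))⁻¹.swap := step_inv_swap (pos_of_mem_twoPowDivThreePow hmem)
          (ne_one_of_mem_twoPowDivThreePow hmem)

/-- The PP and PG values of the `3x+1` algorithm are the reciprocals of those of
the infinite-permutation algorithm. -/
theorem t_reciprocal_s (n : ℕ) :
    (t (n + 1)).1 = 1 / (s n).2 ∧ (t (n + 1)).2 = 1 / (s n).1 := by
  simp [t_succ_eq_inv_swap_s]
end

section
/- Atkin bound for cycles of g: let m be an integer with m ≥ 1 and k a natural number such that g^(k)(m) = m and m ≤ g^(i)(m) for all i < k (m is the least term of the cycle). Let k₁ be the number of indices i < k with g^(i)(m) not divisible by 3, let k₂ = k - k₁, and suppose k₁ ≥ 1. Then, with λ = (4/3)^{k₁}·(2/3)^{k₂} as a real number, |ln λ| ≤ 7·k₁/(24·m); equivalently, m ≤ (7/24)/((1/k₁)·|ln λ|). -/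
lemma cubic_le_exp {t : ℝ} (ht : 0 ≤ t) : 1 + t + t^2/2 + t^3/6 ≤ Real.exp t := by
  have h := Real.sum_le_exp_of_nonneg ht 4
  simp [Finset.sum_range_succ] at h
  convert h using 1
  norm_num [Nat.factorial]

lemma neg_log_one_sub_le {x : ℝ} (hx : 0 < x) (hx4 : x ≤ 1/4) :
    -Real.log (1 - x) ≤ 7 * x / 6 := by
  have h1 : (0:ℝ) < 1 - x := by linarith
  rw [neg_le, Real.le_log_iff_exp_le h1]
  have hP : (0:ℝ) < 1 + (7*x/6) + (7*x/6)^2/2 + (7*x/6)^3/6 := by positivity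
  have h2 := cubic_le_exp (t := 7*x/6) (by linarith)
  rw [Real.exp_neg]
  have h4 : (Real.exp (7*x/6))⁻¹ ≤ (1 + (7*x/6) + (7*x/6)^2/2 + (7*x/6)^3/6)⁻¹ := by
    exact inv_anti₀ hP h2
  refine h4.trans ?_
  rw [inv_le_iff_one_le_mul₀' hP]
  nlinarith [sq_nonneg x, pow_pos hx 3]

lemma step_bound (n : ℤ) (hn : 1 ≤ n) :
    |(if ¬ (3:ℤ) ∣ n then Real.log (4/3) else Real.log (2/3)) -
      (Real.log ((g n : ℤ) : ℝ) - Real.log (n : ℝ))| ≤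
    (if ¬ (3:ℤ) ∣ n then 7/(24*(n:ℝ)) else 0) := by
  have hN : (1:ℝ) ≤ (n:ℝ) := by exact_mod_cast hn
  have hN0 : (0:ℝ) < (n:ℝ) := by linarith
  set N : ℝ := (n:ℝ) with hNdef
  rcases (by omega : n % 3 = 0 ∨ n % 3 = 1 ∨ n % 3 = 2) with h | h | h
  · -- divisible case
    have hd : (3:ℤ) ∣ n := by omega
    obtain ⟨a, rfl⟩ := hd
    have ha : 1 ≤ a := by omega
    have hg : g (3*a) = 2*a := by unfold g; rw [if_pos (by omega)]; omega
    rw [if_neg (by simp), if_neg (by simp), hg]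
    have ha0 : ((a:ℝ)) ≠ 0 := by
      have : (1:ℝ) ≤ (a:ℝ) := by exact_mod_cast ha
      linarith
    have e0 : Real.log ((2:ℝ)/3) = Real.log 2 - Real.log 3 :=
      Real.log_div two_ne_zero three_ne_zero
    have key : |Real.log ((2:ℝ)/3) - (Real.log ((2*a:ℤ):ℝ) - Real.log ((3*a:ℤ):ℝ))| = 0 := by
      push_cast
      rw [Real.log_mul two_ne_zero ha0, Real.log_mul three_ne_zero ha0, e0]
      ring_nf
      simp
    rw [key]
  · -- n % 3 = 1
    have hd : ¬ (3:ℤ) ∣ n := by omega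
    rw [if_pos hd, if_pos hd]
    have hg : (3:ℤ) * g n = 4*n - 1 := by
      unfold g; rw [if_neg (by omega), if_pos h]; omega
    have hgR : ((g n : ℤ) : ℝ) = (4*N - 1)/3 := by
      have := congrArg (fun z : ℤ => (z : ℝ)) hg
      push_cast at this
      rw [hNdef]
      linarith
    rw [hgR]
    set x : ℝ := 1/(4*N) with hxdef
    have hx : 0 < x := by positivity
    have hx4 : x ≤ 1/4 := by
      rw [hxdef]
      rw [div_le_div_iff₀ (by positivity) (by norm_num)]
      linarith
    have h4N1 : (0:ℝ) < 4*N - 1 := by linarith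
    have h1x : 1 - x = (4*N-1)/(4*N) := by
      rw [hxdef]; field_simp
    have e1 : Real.log ((4:ℝ)/3) = Real.log 4 - Real.log 3 :=
      Real.log_div (by norm_num) (by norm_num)
    have e2 : Real.log ((4*N-1)/3) = Real.log (4*N-1) - Real.log 3 :=
      Real.log_div (by linarith) (by norm_num)
    have e3 : Real.log (1 - x) = Real.log (4*N-1) - (Real.log 4 + Real.log N) := by
      rw [h1x, Real.log_div (by linarith) (by positivity),
        Real.log_mul (by norm_num) (by positivity)]
    have hE : Real.log ((4:ℝ)/3) - (Real.log ((4*N-1)/3) - Real.log N)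
        = -Real.log (1 - x) := by
      rw [e1, e2, e3]; ring
    rw [hE]
    have hnn : 0 ≤ -Real.log (1 - x) := by
      have : Real.log (1 - x) ≤ 0 := Real.log_nonpos (by linarith) (by linarith)
      linarith
    rw [abs_of_nonneg hnn]
    have := neg_log_one_sub_le hx hx4
    calc -Real.log (1-x) ≤ 7 * x / 6 := this
      _ = 7/(24*N) := by rw [hxdef]; field_simp; ring
  · -- n % 3 = 2
    have hd : ¬ (3:ℤ) ∣ n := by omega
    rw [if_pos hd, if_pos hd]
    have hg : (3:ℤ) * g n = 4*n + 1 := by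
      unfold g; rw [if_neg (by omega), if_neg (by omega)]; omega
    have hgR : ((g n : ℤ) : ℝ) = (4*N + 1)/3 := by
      have := congrArg (fun z : ℤ => (z : ℝ)) hg
      push_cast at this
      rw [hNdef]
      linarith
    rw [hgR]
    set x : ℝ := 1/(4*N) with hxdef
    have hx : 0 < x := by positivity
    have h1x : 1 + x = (4*N+1)/(4*N) := by
      rw [hxdef]; field_simp
    have e1 : Real.log ((4:ℝ)/3) = Real.log 4 - Real.log 3 :=
      Real.log_div (by norm_num) (by norm_num)
    have e2 : Real.log ((4*N+1)/3) = Real.log (4*N+1) - Real.log 3 :=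
      Real.log_div (by linarith) (by norm_num)
    have e3 : Real.log (1 + x) = Real.log (4*N+1) - (Real.log 4 + Real.log N) := by
      rw [h1x, Real.log_div (by linarith) (by positivity),
        Real.log_mul (by norm_num) (by positivity)]
    have hE : Real.log ((4:ℝ)/3) - (Real.log ((4*N+1)/3) - Real.log N)
        = -Real.log (1 + x) := by
      rw [e1, e2, e3]; ring
    rw [hE]
    have hnn : 0 ≤ Real.log (1 + x) := Real.log_nonneg (by linarith)
    rw [abs_neg, abs_of_nonneg hnn]
    have hlx : Real.log (1 + x) ≤ x := by
      have := Real.log_le_sub_one_of_pos (x := 1+x) (by linarith)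
      linarith
    calc Real.log (1+x) ≤ x := hlx
      _ ≤ 7/(24*N) := by
          rw [hxdef, div_le_div_iff₀ (by positivity) (by positivity)]
          nlinarith

/-- Atkin bound: if `m ≥ 1` is the least term of a cycle of `g` of length `k`,
with `k₁ ≥ 1` steps on integers not divisible by 3 and `k₂ = k - k₁`, then
`|ln λ| ≤ 7 k₁/(24 m)` where `λ = (4/3)^k₁ (2/3)^k₂`. -/
theorem atkin_bound (m : ℤ) (hm : 1 ≤ m) (k : ℕ)
    (hcyc : g^[k] m = m) (hmin : ∀ i < k, m ≤ g^[i] m)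
    (k₁ k₂ : ℕ)
    (hk₁ : k₁ = ((Finset.range k).filter fun i => ¬ (3 : ℤ) ∣ g^[i] m).card)
    (hk₂ : k₂ = k - k₁) (hk₁pos : 1 ≤ k₁) :
    |Real.log ((4 / 3 : ℝ) ^ k₁ * (2 / 3 : ℝ) ^ k₂)| ≤ 7 * k₁ / (24 * (m : ℝ)) := by
  have hmR : (1:ℝ) ≤ (m:ℝ) := by exact_mod_cast hm
  set n : ℕ → ℤ := fun i => g^[i] m with hn
  set L : ℕ → ℝ := fun i => Real.log ((n i : ℤ) : ℝ) with hL
  set P : ℕ → Prop := fun i => ¬ (3:ℤ) ∣ n i with hP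
  set c : ℕ → ℝ := fun i => if P i then Real.log (4/3) else Real.log (2/3) with hc
  have hpos : ∀ i, i < k → 1 ≤ n i := fun i hi => le_trans hm (hmin i hi)
  -- telescoping
  have htel : ∑ i ∈ Finset.range k, (L (i+1) - L i) = 0 := by
    rw [Finset.sum_range_sub]
    simp only [hL, hn, hcyc, Function.iterate_zero_apply, sub_self]
  -- k₁ ≤ k
  have hk₁le : k₁ ≤ k := by
    rw [hk₁]
    exact le_trans (Finset.card_filter_le _ _) (by simp)
  have hk₁' : ((Finset.range k).filter P).card = k₁ := by rw [hk₁]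
  have hcard2 : ((Finset.range k).filter fun i => ¬ P i).card = k₂ := by
    have := Finset.card_filter_add_card_filter_not (s := Finset.range k) (p := P)
    simp only [Finset.card_range] at this
    omega
  -- log of lambda as a sum
  have hlog : Real.log ((4/3:ℝ)^k₁ * (2/3:ℝ)^k₂) = ∑ i ∈ Finset.range k, c i := by
    rw [Real.log_mul (by positivity) (by positivity), Real.log_pow, Real.log_pow]
    rw [← Finset.sum_filter_add_sum_filter_not (Finset.range k) P]
    have h1 : ∑ i ∈ (Finset.range k).filter P, c i = k₁ * Real.log (4/3) := by
      rw [Finset.sum_congr rfl (fun i hi => if_pos (Finset.mem_filter.mp hi).2),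
        Finset.sum_const, nsmul_eq_mul, hk₁']
    have h2 : ∑ i ∈ (Finset.range k).filter (fun i => ¬ P i), c i
        = k₂ * Real.log (2/3) := by
      rw [Finset.sum_congr rfl (fun i hi => if_neg (Finset.mem_filter.mp hi).2),
        Finset.sum_const, nsmul_eq_mul, hcard2]
    rw [h1, h2]
  have hsum : Real.log ((4/3:ℝ)^k₁ * (2/3:ℝ)^k₂)
      = ∑ i ∈ Finset.range k, (c i - (L (i+1) - L i)) := by
    rw [Finset.sum_sub_distrib, htel, sub_zero, hlog]
  rw [hsum]
  calc |∑ i ∈ Finset.range k, (c i - (L (i+1) - L i))|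
      ≤ ∑ i ∈ Finset.range k, |c i - (L (i+1) - L i)| :=
        Finset.abs_sum_le_sum_abs _ _
    _ ≤ ∑ i ∈ Finset.range k, (if P i then 7/(24*((m:ℤ):ℝ)) else 0) := by
        apply Finset.sum_le_sum
        intro i hi
        have hik : i < k := Finset.mem_range.mp hi
        have h1 : 1 ≤ n i := hpos i hik
        have hstep := step_bound (n i) h1
        have hLs : L (i+1) = Real.log ((g (n i) : ℤ) : ℝ) := by
          simp only [hL, hn, Function.iterate_succ_apply']
        rw [hLs]
        refine le_trans hstep ?_
        by_cases hPi : P i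
        · rw [if_pos hPi, if_pos hPi]
          have hmn : (m:ℝ) ≤ ((n i : ℤ):ℝ) := by exact_mod_cast hmin i hik
          gcongr
        · rw [if_neg hPi, if_neg hPi]
    _ = k₁ * (7/(24*((m:ℤ):ℝ))) := by
        rw [Finset.sum_ite, Finset.sum_const, Finset.sum_const_zero, add_zero,
          nsmul_eq_mul, hk₁']
    _ = 7 * k₁ / (24 * (m:ℝ)) := by push_cast; ring
end

section
/- For the 3x+1 mapping T, possible cycles of positive integers require λ < 1 and cycles of negative integers require λ > 1: let n be a nonzero integer and k a natural number with T^(k)(n) = n; let k₁ be the number of indices i < k with T^(i)(n) odd, k₂ = k - k₁, and λ = (3/2)^{k₁}·(1/2)^{k₂} ∈ ℚ; if k₁ ≥ 1 and n > 0 then λ < 1, and if k₁ ≥ 1 and n < 0 then λ > 1. -/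
/-!
Since `2 T m` is `m` or `3 m + 1`, the quantity `2^k T^[k] n` is unchanged by an even step and
tripled plus `2^k` by an odd one, so
`2^k T^[k] n = 3^k₁ n + c` with `c ≥ 0`, and `c > 0` once an odd step has occurred. On a cycle
`T^[k] n = n` this says `3^k₁ n < 2^k n`, and the sign of `n` decides which way
`λ = 3^k₁ / 2^k` compares with `1`.
-/

/-- The `3x+1` mapping. -/
def T (n : ℤ) : ℤ := if n % 2 = 0 then n / 2 else (3 * n + 1) / 2

def oddCount (n : ℤ) (k : ℕ) : ℕ :=
  ((Finset.range k).filter fun i => T^[i] n % 2 = 1).card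

lemma oddCount_succ (n : ℤ) (k : ℕ) :
    oddCount n (k + 1) = oddCount n k + if T^[k] n % 2 = 1 then 1 else 0 := by
  simp only [oddCount, Finset.card_filter, Finset.sum_range_succ]

lemma oddCount_le (n : ℤ) (k : ℕ) : oddCount n k ≤ k :=
  (Finset.card_filter_le _ _).trans (Finset.card_range k).le

lemma two_mul_T (m : ℤ) : 2 * T m = if m % 2 = 1 then 3 * m + 1 else m := by
  unfold T
  split_ifs <;> omega

lemma three_pow_oddCount_mul_le (n : ℤ) (k : ℕ) :
    3 ^ oddCount n k * n ≤ 2 ^ k * T^[k] n := by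
  induction k with
  | zero => simp [oddCount]
  | succ k ih =>
    have hstep := two_mul_T (T^[k] n)
    rw [oddCount_succ, Function.iterate_succ_apply', pow_succ', mul_comm 2, mul_assoc, hstep]
    split_ifs
    · rw [pow_succ']
      nlinarith [pow_pos (two_pos : (0 : ℤ) < 2) k]
    · simpa using ih

lemma three_pow_oddCount_mul_lt (n : ℤ) {k : ℕ} (hk : 0 < oddCount n k) :
    3 ^ oddCount n k * n < 2 ^ k * T^[k] n := by
  induction k with
  | zero => simp [oddCount] at hk
  | succ k ih =>
    have hstep := two_mul_T (T^[k] n)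
    rw [oddCount_succ] at hk ⊢
    rw [Function.iterate_succ_apply', pow_succ', mul_comm 2, mul_assoc, hstep]
    split_ifs with hodd
    · rw [pow_succ']
      nlinarith [pow_pos (two_pos : (0 : ℤ) < 2) k, three_pow_oddCount_mul_le n k]
    · simp only [hodd, if_false, add_zero] at hk ⊢
      exact ih hk

lemma three_halves_pow_mul_half_pow (a b : ℕ) :
    (3 / 2 : ℚ) ^ a * (1 / 2 : ℚ) ^ b = 3 ^ a / 2 ^ (a + b) := by
  rw [div_pow, div_pow, one_pow, pow_add]
  field_simp

theorem cycle_lambda_sign_general (n : ℤ) (k : ℕ) (hcyc : T^[k] n = n)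
    (k₁ k₂ : ℕ)
    (hk₁ : k₁ = ((Finset.range k).filter fun i => T^[i] n % 2 = 1).card)
    (hk₂ : k₂ = k - k₁) (hk₁pos : 1 ≤ k₁) :
    (0 < n → (3 / 2 : ℚ) ^ k₁ * (1 / 2 : ℚ) ^ k₂ < 1) ∧
    (n < 0 → 1 < (3 / 2 : ℚ) ^ k₁ * (1 / 2 : ℚ) ^ k₂) := by
  change k₁ = oddCount n k at hk₁
  have hk : k₁ + k₂ = k := by have := oddCount_le n k; omega
  have key : (3 : ℤ) ^ k₁ * n < 2 ^ k * n := by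
    have := three_pow_oddCount_mul_lt n (hk₁ ▸ hk₁pos)
    rwa [hcyc, ← hk₁] at this
  rw [three_halves_pow_mul_half_pow, hk]
  constructor
  · intro hn
    rw [div_lt_one (by positivity)]
    exact_mod_cast lt_of_mul_lt_mul_right key hn.le
  · intro hn
    rw [one_lt_div (by positivity)]
    exact_mod_cast lt_of_mul_lt_mul_of_nonpos_right key hn.le

/-- For cycles of the `3x+1` mapping with at least one odd step: positive cycles
force `λ < 1` and negative cycles force `λ > 1`, where `λ = (3/2)^k₁ (1/2)^k₂`,
`k₁` counting the odd iterates among the first `k` and `k₂ = k - k₁`. -/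
theorem cycle_lambda_sign (n : ℤ) (hn : n ≠ 0) (k : ℕ) (hcyc : T^[k] n = n)
    (k₁ k₂ : ℕ)
    (hk₁ : k₁ = ((Finset.range k).filter fun i => T^[i] n % 2 = 1).card)
    (hk₂ : k₂ = k - k₁) (hk₁pos : 1 ≤ k₁) :
    (0 < n → (3 / 2 : ℚ) ^ k₁ * (1 / 2 : ℚ) ^ k₂ < 1) ∧
    (n < 0 → 1 < (3 / 2 : ℚ) ^ k₁ * (1 / 2 : ℚ) ^ k₂) :=
  cycle_lambda_sign_general n k hcyc k₁ k₂ hk₁ hk₂ hk₁pos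
end

section
/- Atkin-type bound for cycles of the 3x+1 mapping: let m be a nonzero integer and k a natural number such that T^(k)(m) = m and |m| ≤ |T^(i)(m)| for all i < k (m is a term of least absolute value of the cycle). Let k₁ be the number of indices i < k with T^(i)(m) odd, let k₂ = k - k₁, and suppose k₁ ≥ 1. Then, with λ = (3/2)^{k₁}·(1/2)^{k₂} as a real number, |ln λ| ≤ 5·k₁/(12·|m|); equivalently, |m| ≤ (5/12)/((1/k₁)·|ln λ|). -/
lemma log_three_half_le : Real.log (3/2) ≤ 5/12 := by
  have h1 : Real.log ((3/2:ℝ)^(12:ℕ)) ≤ 5 := by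
    rw [Real.log_le_iff_le_exp (by positivity)]
    have he : (2.7182818283:ℝ) < Real.exp 1 := Real.exp_one_gt_d9
    have h5 : Real.exp 5 = Real.exp 1 ^ (5:ℕ) := by
      rw [← Real.exp_nat_mul]; norm_num
    have : (2.7:ℝ)^(5:ℕ) ≤ Real.exp 1 ^ (5:ℕ) := by
      apply pow_le_pow_left₀ (by norm_num) (by linarith)
    nlinarith [this]
  rw [Real.log_pow] at h1
  push_cast at h1
  linarith

lemma term_bound (n : ℤ) (hn : n ≠ 0) :
    |Real.log (1 + 1/(3*(n:ℝ)))| ≤ 5/(12*|(n:ℝ)|) := by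
  rcases lt_trichotomy n 0 with h | h | h
  · rcases eq_or_lt_of_le (show n ≤ -1 by omega) with h1 | h1
    · have : n = -1 := by omega
      subst this
      have : (1:ℝ) + 1/(3*((-1:ℤ):ℝ)) = (3/2)⁻¹ := by norm_num
      rw [this, Real.log_inv, abs_neg]
      rw [abs_of_nonneg (Real.log_nonneg (by norm_num))]
      calc Real.log (3/2) ≤ 5/12 := log_three_half_le
        _ ≤ 5/(12*|((-1:ℤ):ℝ)|) := by norm_num
    · -- n ≤ -2
      have hn2 : n ≤ -2 := by omega
      have ha2 : (2:ℝ) ≤ -(n:ℝ) := by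
        have : (n:ℝ) ≤ -2 := by exact_mod_cast hn2
        linarith
      set a : ℝ := -(n:ℝ) with ha
      have hx : (1:ℝ) + 1/(3*(n:ℝ)) = (3*a-1)/(3*a) := by
        have hne : (n:ℝ) ≠ 0 := by
          simp only [ne_eq, Int.cast_eq_zero]; exact hn
        rw [ha]; field_simp; ring
      have hpos : (0:ℝ) < (3*a-1)/(3*a) := by
        apply div_pos <;> linarith
      have hle1 : (3*a-1)/(3*a) ≤ 1 := by
        rw [div_le_one (by linarith)]; linarith
      rw [hx, abs_of_nonpos (Real.log_nonpos hpos.le hle1)]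
      rw [← Real.log_inv]
      have hinv : ((3*a-1)/(3*a))⁻¹ = 1 + 1/(3*a-1) := by
        have h3 : (3*a-1) ≠ 0 := by linarith
        have h4 : (3*a) ≠ 0 := by linarith
        field_simp; ring
      rw [hinv]
      have := Real.log_le_sub_one_of_pos (show (0:ℝ) < 1 + 1/(3*a-1) by
        have : (0:ℝ) < 1/(3*a-1) := by
          apply div_pos one_pos; linarith
        linarith)
      have habs : |(n:ℝ)| = a := by
        rw [ha, abs_of_neg]; linarith
      rw [habs]
      have hle : 1/(3*a-1) ≤ 5/(12*a) := by
        rw [div_le_div_iff₀ (by linarith) (by linarith)]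
        nlinarith
      linarith
  · exact absurd h hn
  · have h1 : (1:ℝ) ≤ (n:ℝ) := by exact_mod_cast h
    have hx : (0:ℝ) < 1/(3*(n:ℝ)) := by positivity
    rw [abs_of_nonneg (Real.log_nonneg (by linarith)), abs_of_pos (by linarith : (0:ℝ) < (n:ℝ))]
    have := Real.log_le_sub_one_of_pos (show (0:ℝ) < 1 + 1/(3*(n:ℝ)) by linarith)
    have hle : 1/(3*(n:ℝ)) ≤ 5/(12*(n:ℝ)) := by
      rw [div_le_div_iff₀ (by linarith) (by linarith)]
      nlinarith
    linarith

-- step lemma: log ratio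
lemma log_step (a : ℤ) (ha : a ≠ 0) :
    Real.log (T a : ℝ) - Real.log (a : ℝ) =
      if a % 2 = 1 then Real.log (3/2) + Real.log (1 + 1/(3*(a:ℝ)))
      else Real.log (1/2) := by
  have har : (a:ℝ) ≠ 0 := Int.cast_ne_zero.mpr ha
  rcases Int.emod_two_eq a with h | h
  · -- even
    rw [if_neg (by omega)]
    obtain ⟨c, rfl⟩ := Int.dvd_of_emod_eq_zero h
    have hc : c ≠ 0 := by rintro rfl; simp at ha
    have hT : T (2*c) = c := by
      unfold T; rw [if_pos (by omega)]; omega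
    rw [hT]
    have : ((2*c : ℤ):ℝ) = 2 * (c:ℝ) := by push_cast; ring
    rw [this, Real.log_mul (by norm_num) (Int.cast_ne_zero.mpr hc)]
    rw [Real.log_div (by norm_num) (by norm_num)]
    simp [Real.log_one]
  · -- odd
    rw [if_pos h]
    have hd : (2:ℤ) ∣ 3*a+1 := by omega
    obtain ⟨c, hc⟩ := hd
    have hT : T a = c := by
      unfold T; rw [if_neg (by omega)]; omega
    have hc0 : c ≠ 0 := by
      rintro rfl; omega
    rw [hT]
    have h1 : (1:ℝ) + 1/(3*(a:ℝ)) = 2*(c:ℝ)/(3*(a:ℝ)) := by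
      have : (3:ℝ)*(a:ℝ)+1 = 2*(c:ℝ) := by exact_mod_cast hc
      field_simp
      linarith
    rw [h1]
    rw [Real.log_div (by norm_num) (by norm_num),
        Real.log_div (by positivity) (by positivity),
        Real.log_mul (by norm_num) (Int.cast_ne_zero.mpr hc0),
        Real.log_mul (by norm_num) har]
    ring

/-- Atkin-type bound for cycles of the `3x+1` mapping: if `m ≠ 0` is a term of
least absolute value of a cycle of length `k`, with `k₁ ≥ 1` odd steps and
`k₂ = k - k₁` even steps, then `|ln λ| ≤ 5 k₁/(12 |m|)` where
`λ = (3/2)^k₁ (1/2)^k₂`. -/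
theorem atkin_bound_3x1 (m : ℤ) (hm : m ≠ 0) (k : ℕ)
    (hcyc : T^[k] m = m) (hmin : ∀ i < k, |m| ≤ |T^[i] m|)
    (k₁ k₂ : ℕ)
    (hk₁ : k₁ = ((Finset.range k).filter fun i => T^[i] m % 2 = 1).card)
    (hk₂ : k₂ = k - k₁) (hk₁pos : 1 ≤ k₁) :
    |Real.log ((3 / 2 : ℝ) ^ k₁ * (1 / 2 : ℝ) ^ k₂)| ≤ 5 * k₁ / (12 * |(m : ℝ)|) := by
  have hnz : ∀ i < k, T^[i] m ≠ 0 := by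
    intro i hi h0
    have := hmin i hi
    rw [h0] at this
    simp at this
    exact hm (by omega)
  have hmabs : (0:ℝ) < |(m:ℝ)| := by
    simp only [abs_pos, ne_eq, Int.cast_eq_zero]; exact hm
  -- telescoping
  have htel : ∑ i ∈ Finset.range k,
      (Real.log ((T^[i+1] m : ℤ) : ℝ) - Real.log ((T^[i] m : ℤ) : ℝ)) = 0 := by
    rw [Finset.sum_range_sub (fun i => Real.log ((T^[i] m : ℤ) : ℝ))]
    rw [hcyc]
    simp
  have hcongr : ∀ i ∈ Finset.range k,
      Real.log ((T^[i+1] m : ℤ) : ℝ) - Real.log ((T^[i] m : ℤ) : ℝ) =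
      (if T^[i] m % 2 = 1 then
        Real.log (3/2) + Real.log (1 + 1/(3*((T^[i] m : ℤ) : ℝ)))
      else Real.log (1/2)) := by
    intro i hi
    rw [Function.iterate_succ_apply']
    exact log_step _ (hnz i (Finset.mem_range.mp hi))
  have hcard2 : ((Finset.range k).filter (fun i => ¬ (T^[i] m % 2 = 1))).card = k₂ := by
    have h := Finset.card_filter_add_card_filter_not
      (s := Finset.range k) (p := fun i => T^[i] m % 2 = 1)
    rw [Finset.card_range] at h
    omega
  rw [Finset.sum_congr rfl hcongr, Finset.sum_ite, Finset.sum_add_distrib,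
    Finset.sum_const, Finset.sum_const, hcard2] at htel
  set F := (Finset.range k).filter (fun i => T^[i] m % 2 = 1) with hF
  set S := ∑ i ∈ F, Real.log (1 + 1/(3*((T^[i] m : ℤ) : ℝ))) with hS
  rw [← hk₁] at htel
  have htel2 : (k₁:ℝ) * Real.log (3/2) + S + (k₂:ℝ) * Real.log (1/2) = 0 := by
    simpa [nsmul_eq_mul] using htel
  have hlog : Real.log ((3/2:ℝ)^k₁ * (1/2:ℝ)^k₂)
      = (k₁:ℝ) * Real.log (3/2) + (k₂:ℝ) * Real.log (1/2) := by
    rw [Real.log_mul (by positivity) (by positivity), Real.log_pow, Real.log_pow]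
  have heq : Real.log ((3/2:ℝ)^k₁ * (1/2:ℝ)^k₂) = -S := by
    rw [hlog]; linarith
  rw [heq, abs_neg]
  calc |S| ≤ ∑ i ∈ F, |Real.log (1 + 1/(3*((T^[i] m : ℤ) : ℝ)))| :=
        Finset.abs_sum_le_sum_abs _ _
    _ ≤ ∑ i ∈ F, 5/(12*|(m:ℝ)|) := by
        apply Finset.sum_le_sum
        intro i hi
        rw [hF, Finset.mem_filter, Finset.mem_range] at hi
        have hlt := hi.1
        have h1 := term_bound (T^[i] m) (hnz i hlt)
        have hmn : |(m:ℝ)| ≤ |((T^[i] m : ℤ):ℝ)| := by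
          have := hmin i hlt
          calc |(m:ℝ)| = ((|m| : ℤ) : ℝ) := by rw [Int.cast_abs]
            _ ≤ ((|T^[i] m| : ℤ) : ℝ) := by exact_mod_cast this
            _ = |((T^[i] m : ℤ):ℝ)| := by rw [Int.cast_abs]
        have h2 : 5/(12*|((T^[i] m : ℤ):ℝ)|) ≤ 5/(12*|(m:ℝ)|) := by
          gcongr
        linarith
    _ = (k₁:ℝ) * (5/(12*|(m:ℝ)|)) := by
        rw [Finset.sum_const, ← hk₁, nsmul_eq_mul]
    _ = 5 * k₁ / (12 * |(m:ℝ)|) := by ring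
end
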